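/- A module with the finite exchange property satisfying internal cancellation satisfies the cancellation property: M ⊕ A ≅ M ⊕ B implies A ≅ B. -/

import Mathlib

/-- The finite exchange property for a module M. -/
def FiniteExchange (R : Type u) [Ring R] (M : Type v) [AddCommGroup M]
    [Module R M] : Prop :=
  ∀ (A : Type v) [AddCommGroup A] [Module R A] (n : ℕ)
    (Mp N : Submodule R A) (Ai : Fin n → Submodule R A),
    IsCompl Mp N → Nonempty (↥Mp ≃ₗ[R] M) →
    iSupIndep Ai → iSup Ai = ⊤ →
    ∃ B : Fin n → Submodule R A, (∀ i, B i ≤ Ai i) ∧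
      iSupIndep (Fin.cons Mp B : Fin (n + 1) → Submodule R A) ∧
      iSup (Fin.cons Mp B : Fin (n + 1) → Submodule R A) = ⊤

/-! In `X = M × B` let `M'` and `N` be the images of `M × 0` and `0 × A`, so `X = M' ⊕ N`.
Exchanging `M'` against `X = M ⊕ B` gives `B₀ ≤ M` and `B₁ ≤ B` with `X = M' ⊕ B₀ ⊕ B₁`, hence
`A ≅ N ≅ B₀ ⊕ B₁`. By the modular law `M = B₀ ⊕ C₀` and `B = B₁ ⊕ C₁`, where
`C₀ = M ∩ (B₁ + M')` and `C₁ = B ∩ (M' + B₀)`; then `X = (B₀ ⊕ B₁) ⊕ (C₀ ⊕ C₁)`, so also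
`M ≅ M' ≅ C₀ ⊕ C₁`. Internal cancellation applied to `M ≅ C₀ ⊕ B₀ ≅ C₀ ⊕ C₁` yields `B₀ ≅ C₁`,
whence `A ≅ B₀ ⊕ B₁ ≅ C₁ ⊕ B₁ ≅ B`. -/

universe u v

section ModularLattice
variable {α : Type*} [Lattice α] [BoundedOrder α] [IsModularLattice α]

theorem sup_inf_eq_of_isCompl_of_le {b k p : α} (h : IsCompl b k) (hb : b ≤ p) :
    b ⊔ p ⊓ k = p := by
  rw [inf_comm, ← sup_inf_assoc_of_le _ hb, h.sup_eq_top, top_inf_eq]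

theorem IsCompl.sup_sup_of_sup_eq {p q b₀ c₀ b₁ c₁ : α} (hpq : IsCompl p q)
    (h₀ : Disjoint b₀ c₀) (hp : b₀ ⊔ c₀ = p) (h₁ : Disjoint b₁ c₁) (hq : b₁ ⊔ c₁ = q) :
    IsCompl (b₀ ⊔ b₁) (c₀ ⊔ c₁) := by
  subst hp hq
  have hb₀ : Disjoint b₀ (c₀ ⊔ (b₁ ⊔ c₁)) :=
    h₀.disjoint_sup_right_of_disjoint_sup_left hpq.disjoint
  have hb₁ : Disjoint b₁ (c₁ ⊔ c₀) :=
    h₁.disjoint_sup_right_of_disjoint_sup_left (hpq.disjoint.symm.mono_right le_sup_right)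
  rw [sup_left_comm] at hb₀
  rw [sup_comm] at hb₁
  refine ⟨hb₁.disjoint_sup_left_of_disjoint_sup_right hb₀, ?_⟩
  rw [codisjoint_iff, sup_sup_sup_comm, hpq.sup_eq_top]

end ModularLattice

namespace Submodule
variable {R : Type*} {E : Type*} [Ring R] [AddCommGroup E] [Module R E]

noncomputable def prodEquivSupOfDisjoint {p q : Submodule R E} (h : Disjoint p q) :
    (p × q) ≃ₗ[R] ↥(p ⊔ q) :=
  (LinearEquiv.ofInjective (p.subtype.coprod q.subtype) (by
    rw [← LinearMap.ker_eq_bot, LinearMap.ker_coprod_of_disjoint_range, ker_subtype,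
      ker_subtype, prod_bot]
    rwa [range_subtype, range_subtype])).trans
  (LinearEquiv.ofEq _ _ (by rw [LinearMap.range_coprod, range_subtype, range_subtype]))

noncomputable def equivOfIsComplOfIsCompl {p q₁ q₂ : Submodule R E} (h₁ : IsCompl p q₁)
    (h₂ : IsCompl p q₂) : q₁ ≃ₗ[R] q₂ :=
  (quotientEquivOfIsCompl p q₁ h₁).symm.trans (quotientEquivOfIsCompl p q₂ h₂)

theorem isCompl_fst_snd (M₁ M₂ : Type*) [AddCommGroup M₁] [Module R M₁] [AddCommGroup M₂]
    [Module R M₂] : IsCompl (fst R M₁ M₂) (snd R M₁ M₂) :=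
  ⟨disjoint_iff.mpr (fst_inf_snd R M₁ M₂), codisjoint_iff.mpr (fst_sup_snd R M₁ M₂)⟩

theorem exists_isCompl_of_prod_equiv {M₁ M₂ : Type*} [AddCommGroup M₁] [Module R M₁]
    [AddCommGroup M₂] [Module R M₂] (e : (M₁ × M₂) ≃ₗ[R] E) :
    ∃ p q : Submodule R E, IsCompl p q ∧ Nonempty (p ≃ₗ[R] M₁) ∧ Nonempty (q ≃ₗ[R] M₂) :=
  ⟨(fst R M₁ M₂).map e, (snd R M₁ M₂).map e,
    by simpa using (orderIsoMapComap e).isCompl (isCompl_fst_snd M₁ M₂),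
    ⟨(e.submoduleMap _).symm.trans (fstEquiv R M₁ M₂)⟩,
    ⟨(e.submoduleMap _).symm.trans (sndEquiv R M₁ M₂)⟩⟩

end Submodule

open Submodule

def InternalCancellation (R M : Type*) [Ring R] [AddCommGroup M] [Module R M] : Prop :=
  ∀ (A₁ B₁ A₂ B₂ : Submodule R M), IsCompl A₁ B₁ → IsCompl A₂ B₂ →
    Nonempty (↥A₁ ≃ₗ[R] ↥A₂) → Nonempty (↥B₁ ≃ₗ[R] ↥B₂)

namespace InternalCancellation
variable {R M : Type*} [Ring R] [AddCommGroup M] [Module R M]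

theorem nonempty_equiv_of_prod_equiv (hic : InternalCancellation R M)
    {X Y X' Y' : Type*} [AddCommGroup X] [Module R X] [AddCommGroup Y] [Module R Y]
    [AddCommGroup X'] [Module R X'] [AddCommGroup Y'] [Module R Y']
    (e : (X × Y) ≃ₗ[R] M) (e' : (X' × Y') ≃ₗ[R] M) (f : X ≃ₗ[R] X') :
    Nonempty (Y ≃ₗ[R] Y') := by
  obtain ⟨P, Q, hPQ, ⟨eP⟩, ⟨eQ⟩⟩ := exists_isCompl_of_prod_equiv e
  obtain ⟨P', Q', hPQ', ⟨eP'⟩, ⟨eQ'⟩⟩ := exists_isCompl_of_prod_equiv e'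
  obtain ⟨g⟩ := hic P Q P' Q' hPQ hPQ' ⟨eP.trans (f.trans eP'.symm)⟩
  exact ⟨eQ.symm.trans (g.trans eQ')⟩

theorem nonempty_sup_equiv (hic : InternalCancellation R M) {X : Type*} [AddCommGroup X]
    [Module R X] {M' P Q B₀ B₁ : Submodule R X} (eM' : M' ≃ₗ[R] M) (eP : P ≃ₗ[R] M)
    (hPQ : IsCompl P Q) (hB₀ : B₀ ≤ P) (hB₁ : B₁ ≤ Q) (h : IsCompl M' (B₀ ⊔ B₁))
    (h₀ : IsCompl B₀ (B₁ ⊔ M')) (h₁ : IsCompl B₁ (M' ⊔ B₀)) :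
    Nonempty (↥(B₀ ⊔ B₁) ≃ₗ[R] Q) := by
  set C₀ := P ⊓ (B₁ ⊔ M')
  set C₁ := Q ⊓ (M' ⊔ B₀)
  have hC₀ : Disjoint B₀ C₀ := h₀.disjoint.mono_right inf_le_right
  have hC₁ : Disjoint B₁ C₁ := h₁.disjoint.mono_right inf_le_right
  have hP : B₀ ⊔ C₀ = P := sup_inf_eq_of_isCompl_of_le h₀ hB₀
  have hQ : B₁ ⊔ C₁ = Q := sup_inf_eq_of_isCompl_of_le h₁ hB₁
  have hC : IsCompl (B₀ ⊔ B₁) (C₀ ⊔ C₁) := hPQ.sup_sup_of_sup_eq hC₀ hP hC₁ hQ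
  have eM₀ : (C₀ × B₀) ≃ₗ[R] M := (LinearEquiv.prodComm R _ _).trans
    ((prodEquivSupOfDisjoint hC₀).trans ((LinearEquiv.ofEq _ _ hP).trans eP))
  have eM₁ : (C₀ × C₁) ≃ₗ[R] M := (prodEquivSupOfDisjoint (hPQ.disjoint.mono inf_le_left
    inf_le_left)).trans ((equivOfIsComplOfIsCompl hC h.symm).trans eM')
  obtain ⟨f⟩ := hic.nonempty_equiv_of_prod_equiv eM₀ eM₁ (LinearEquiv.refl R C₀)
  exact ⟨(prodEquivSupOfDisjoint (h₀.disjoint.mono_right le_sup_left)).symm.trans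
    ((f.prodCongr (LinearEquiv.refl R B₁)).trans ((LinearEquiv.prodComm R _ _).trans
    ((prodEquivSupOfDisjoint hC₁).trans (LinearEquiv.ofEq _ _ hQ))))⟩

end InternalCancellation

theorem FiniteExchange.exists_le_le_isCompl {R : Type u} {M : Type v} [Ring R]
    [AddCommGroup M] [Module R M] (hex : FiniteExchange R M) {X : Type v} [AddCommGroup X]
    [Module R X] {M' N P Q : Submodule R X} (hM'N : IsCompl M' N) (eM' : M' ≃ₗ[R] M)
    (hPQ : IsCompl P Q) :
    ∃ B₀ ≤ P, ∃ B₁ ≤ Q, IsCompl M' (B₀ ⊔ B₁) ∧ IsCompl B₀ (B₁ ⊔ M') ∧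
      IsCompl B₁ (M' ⊔ B₀) := by
  obtain ⟨B, hB, hind, hsup⟩ := hex X 2 M' N ![P, Q] hM'N ⟨eM'⟩
    ((iSupIndep_pair (i := 0) (j := 1) (by decide) (by decide)).2 hPQ.disjoint)
    (by rw [← sSup_range, Matrix.range_cons, Matrix.range_cons, Matrix.range_empty]
        simp [hPQ.symm.sup_eq_top])
  rw [iSupIndep_fin_three] at hind
  rw [iSup_fin_three] at hsup
  refine ⟨B 0, hB 0, B 1, hB 1, ⟨hind.1, ?_⟩, ⟨hind.2.1, ?_⟩, ⟨hind.2.2, ?_⟩⟩ <;>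
    rw [codisjoint_iff, ← hsup] <;> ac_rfl

/-- A module with the finite exchange property satisfying internal cancellation
satisfies the cancellation property. -/
theorem stmt15 {R : Type u} {M : Type v} [Ring R] [AddCommGroup M] [Module R M]
    (hex : FiniteExchange R M)
    (hic : ∀ (A₁ B₁ A₂ B₂ : Submodule R M), IsCompl A₁ B₁ → IsCompl A₂ B₂ →
      Nonempty (↥A₁ ≃ₗ[R] ↥A₂) → Nonempty (↥B₁ ≃ₗ[R] ↥B₂)) :
    ∀ (A : Type v) (B : Type v) [AddCommGroup A] [Module R A]
      [AddCommGroup B] [Module R B],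
      Nonempty ((M × A) ≃ₗ[R] (M × B)) → Nonempty (A ≃ₗ[R] B) := by
  rintro A B _ _ _ _ ⟨φ⟩
  obtain ⟨M', N, hM'N, ⟨eM'⟩, ⟨eN⟩⟩ := exists_isCompl_of_prod_equiv φ
  obtain ⟨B₀, hB₀, B₁, hB₁, h, h₀, h₁⟩ :=
    hex.exists_le_le_isCompl hM'N eM' (isCompl_fst_snd M B)
  obtain ⟨e⟩ := InternalCancellation.nonempty_sup_equiv hic eM' (fstEquiv R M B)
    (isCompl_fst_snd M B) hB₀ hB₁ h h₀ h₁
  exact ⟨eN.symm.trans ((equivOfIsComplOfIsCompl hM'N h).trans (e.trans (sndEquiv R M B)))⟩
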